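/- Let f : ℝᵐ × ℝⁿ → ℝᵏ be smooth, viewed as a fibered morphism over ℝᵐ with fiber coordinates x^p. If two such morphisms f, g have the same fiberwise (k,1)-jet at (x₀, x₀^p), i.e. ∂_β f(x₀, x₀^p) = ∂_β g(x₀, x₀^p), ∂_β ∂_i f(x₀, x₀^p) = ∂_β ∂_i g(x₀, x₀^p), and ∂_β ∂_p f(x₀, x₀^p) = ∂_β ∂_p g(x₀, x₀^p) for all fiber multi-indices β with |β| ≤ k, then the maps h_f, h_g : J¹-fiber → J¹-fiber defined by h(x^p, x^p_i) = (f(x₀, x^p), ∂_i f(x₀, x^p) + ∂_p f(x₀, x^p) x^p_i) have the same k-jet at (x₀^p, x^p_{i,0}) for every value of x^p_{i,0}. -/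

import Mathlib

/-- Base partial derivative `∂_i` of a fibered morphism `f : ℝᵐ × ℝⁿ → ℝᶜ` over `ℝᵐ`. -/
noncomputable def pdB {m n c : ℕ} (i : Fin m)
    (f : (Fin m → ℝ) × (Fin n → ℝ) → (Fin c → ℝ)) :
    (Fin m → ℝ) × (Fin n → ℝ) → (Fin c → ℝ) :=
  fun y => fderiv ℝ f y (Pi.single i 1, 0)

/-- Fiber partial derivative `∂_p`. -/
noncomputable def pdF {m n c : ℕ} (p : Fin n)
    (f : (Fin m → ℝ) × (Fin n → ℝ) → (Fin c → ℝ)) :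
    (Fin m → ℝ) × (Fin n → ℝ) → (Fin c → ℝ) :=
  fun y => fderiv ℝ f y (0, Pi.single p 1)

/-- Iterated fiber partial derivative `∂_β` along a fiber multi-index (list). -/
noncomputable def pdFs {m n c : ℕ} :
    List (Fin n) → ((Fin m → ℝ) × (Fin n → ℝ) → (Fin c → ℝ)) →
      ((Fin m → ℝ) × (Fin n → ℝ) → (Fin c → ℝ))
  | [], f => f
  | p :: β, f => pdF p (pdFs β f)

/-- The restriction to the fiber over `x₀` of the first jet prolongation `J¹f`:
`h(x^p, x^p_i) = (f(x₀,x^p), ∂_i f(x₀,x^p) + ∂_p f(x₀,x^p) x^p_i)`. -/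
noncomputable def jetMap {m n c : ℕ}
    (f : (Fin m → ℝ) × (Fin n → ℝ) → (Fin c → ℝ)) (x₀ : Fin m → ℝ) :
    (Fin n → ℝ) × (Fin m × Fin n → ℝ) → (Fin c → ℝ) × (Fin m × Fin c → ℝ) :=
  fun w =>
    (f (x₀, w.1),
      fun q => pdB q.1 f (x₀, w.1) q.2 + ∑ p : Fin n, pdF p f (x₀, w.1) q.2 * w.2 (q.1, p))

/-! ### Auxiliary: agreement of jets via directional derivatives -/

section Agree
variable {E F G : Type*} [NormedAddCommGroup E] [NormedSpace ℝ E]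
  [NormedAddCommGroup F] [NormedSpace ℝ F] [NormedAddCommGroup G] [NormedSpace ℝ G]

/-- Directional derivative along a fixed vector. -/
noncomputable def dd (v : E) (f : E → F) : E → F := fun y => fderiv ℝ f y v

lemma ContDiff.dd_smooth {f : E → F} (hf : ContDiff ℝ (⊤ : ℕ∞) f) (v : E) : ContDiff ℝ (⊤ : ℕ∞) (dd v f) :=
  (hf.fderiv_right (by simp)).clm_apply contDiff_const

lemma iteratedFDeriv_dd_apply {f : E → F} (hf : ContDiff ℝ (⊤ : ℕ∞) f) {j : ℕ} (x v : E)
    (mv : Fin j → E) :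
    iteratedFDeriv ℝ j (dd v f) x mv = iteratedFDeriv ℝ j (fderiv ℝ f) x mv v := by
  have e : dd v f = (ContinuousLinearMap.apply ℝ F v) ∘ (fderiv ℝ f) := rfl
  rw [e, (ContinuousLinearMap.apply ℝ F v).iteratedFDeriv_comp_left
    ((hf.fderiv_right (m := ((⊤ : ℕ∞) : WithTop ℕ∞)) (by simp)).contDiffAt (x := x)) (by exact_mod_cast le_top)]
  rfl

/-- Two functions have the same `k`-jet at `a`. -/
def Agree (k : ℕ) (f g : E → F) (a : E) : Prop :=
  ∀ i ≤ k, iteratedFDeriv ℝ i f a = iteratedFDeriv ℝ i g a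

lemma Agree.eq_at {k : ℕ} {f g : E → F} {a : E} (h : Agree k f g a) : f a = g a := by
  have h0 := h 0 (Nat.zero_le _)
  simpa using DFunLike.congr_fun h0 (fun _ => 0)

lemma Agree.mono {k k' : ℕ} {f g : E → F} {a : E} (h : Agree k f g a) (hk : k' ≤ k) :
    Agree k' f g a := fun i hi => h i (le_trans hi hk)

lemma Agree.deriv {k : ℕ} {f g : E → F} {a : E} (hf : ContDiff ℝ (⊤ : ℕ∞) f) (hg : ContDiff ℝ (⊤ : ℕ∞) g)
    (h : Agree (k+1) f g a) (v : E) : Agree k (dd v f) (dd v g) a := by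
  intro i hi
  ext mv
  rw [iteratedFDeriv_dd_apply hf, iteratedFDeriv_dd_apply hg]
  have e1 := iteratedFDeriv_succ_apply_right (𝕜 := ℝ) (f := f) (x := a) (Fin.snoc mv v)
  have e2 := iteratedFDeriv_succ_apply_right (𝕜 := ℝ) (f := g) (x := a) (Fin.snoc mv v)
  simp only [Fin.init_snoc, Fin.snoc_last] at e1 e2
  rw [← e1, ← e2, h (i+1) (by omega)]

lemma Agree.succ {k : ℕ} {f g : E → F} {a : E} (hf : ContDiff ℝ (⊤ : ℕ∞) f) (hg : ContDiff ℝ (⊤ : ℕ∞) g)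
    (h0 : f a = g a) (h : ∀ v, Agree k (dd v f) (dd v g) a) : Agree (k+1) f g a := by
  intro i hi
  match i with
  | 0 => ext mv; simp [h0]
  | (i+1) =>
    ext mv
    rw [iteratedFDeriv_succ_apply_right, iteratedFDeriv_succ_apply_right]
    rw [← iteratedFDeriv_dd_apply hf, ← iteratedFDeriv_dd_apply hg,
      h (mv (Fin.last i)) i (by omega)]

lemma Agree.add {k : ℕ} {f₁ f₂ g₁ g₂ : E → F} {a : E}
    (hf₁ : ContDiff ℝ (⊤ : ℕ∞) f₁) (hf₂ : ContDiff ℝ (⊤ : ℕ∞) f₂)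
    (hg₁ : ContDiff ℝ (⊤ : ℕ∞) g₁) (hg₂ : ContDiff ℝ (⊤ : ℕ∞) g₂)
    (h₁ : Agree k f₁ g₁ a) (h₂ : Agree k f₂ g₂ a) :
    Agree k (fun x => f₁ x + f₂ x) (fun x => g₁ x + g₂ x) a := by
  intro i hi
  rw [iteratedFDeriv_add_apply' (hf₁.of_le (by exact_mod_cast le_top)).contDiffAt (hf₂.of_le (by exact_mod_cast le_top)).contDiffAt,
    iteratedFDeriv_add_apply' (hg₁.of_le (by exact_mod_cast le_top)).contDiffAt (hg₂.of_le (by exact_mod_cast le_top)).contDiffAt, h₁ i hi, h₂ i hi]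

lemma Agree.smul {k : ℕ} {f g : E → F} {a : E} (c : ℝ)
    (hf : ContDiff ℝ (⊤ : ℕ∞) f) (hg : ContDiff ℝ (⊤ : ℕ∞) g) (h : Agree k f g a) :
    Agree k (fun x => c • f x) (fun x => c • g x) a := by
  intro i hi
  rw [iteratedFDeriv_const_smul_apply' (hf.of_le (by exact_mod_cast le_top)).contDiffAt,
    iteratedFDeriv_const_smul_apply' (hg.of_le (by exact_mod_cast le_top)).contDiffAt, h i hi]

lemma Agree.sum {k : ℕ} {ι : Type*} [DecidableEq ι] (s : Finset ι) {f g : ι → E → F} {a : E}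
    (hf : ∀ i, ContDiff ℝ (⊤ : ℕ∞) (f i)) (hg : ∀ i, ContDiff ℝ (⊤ : ℕ∞) (g i))
    (h : ∀ i, Agree k (f i) (g i) a) :
    Agree k (fun x => ∑ i ∈ s, f i x) (fun x => ∑ i ∈ s, g i x) a := by
  induction s using Finset.induction with
  | empty => intro i hi; simp
  | @insert j s hj ih =>
    simp only [Finset.sum_insert hj]
    exact Agree.add (hf j) (ContDiff.sum fun i _ => hf i) (hg j)
      (ContDiff.sum fun i _ => hg i) (h j) ih

lemma Agree.clm_comp {k : ℕ} {f g : E → F} {a : E} (L : F →L[ℝ] G)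
    (hf : ContDiff ℝ (⊤ : ℕ∞) f) (hg : ContDiff ℝ (⊤ : ℕ∞) g) (h : Agree k f g a) :
    Agree k (fun x => L (f x)) (fun x => L (g x)) a := by
  intro i hi
  have e1 : (fun x => L (f x)) = L ∘ f := rfl
  have e2 : (fun x => L (g x)) = L ∘ g := rfl
  rw [e1, e2, L.iteratedFDeriv_comp_left (hf.contDiffAt (x := a)) (by exact_mod_cast le_top),
    L.iteratedFDeriv_comp_left (hg.contDiffAt (x := a)) (by exact_mod_cast le_top), h i hi]

end Agree

/-! ### Fiber restrictions -/

section Fiber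
variable {mN nN cN : ℕ} (x₀ : Fin mN → ℝ)
variable {F G : (Fin mN → ℝ) × (Fin nN → ℝ) → (Fin cN → ℝ)}

lemma ContDiff.pdF_smooth (hF : ContDiff ℝ (⊤ : ℕ∞) F) (p : Fin nN) : ContDiff ℝ (⊤ : ℕ∞) (pdF p F) :=
  hF.dd_smooth _

lemma ContDiff.pdB_smooth (hF : ContDiff ℝ (⊤ : ℕ∞) F) (i : Fin mN) : ContDiff ℝ (⊤ : ℕ∞) (pdB i F) :=
  hF.dd_smooth _

lemma pdFs_append (β : List (Fin nN)) (p : Fin nN) :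
    pdFs β (pdF p F) = pdFs (β ++ [p]) F := by
  induction β with
  | nil => rfl
  | cons q β ih => show pdF q (pdFs β (pdF p F)) = _; rw [ih]; rfl

lemma contDiff_rest (hF : ContDiff ℝ (⊤ : ℕ∞) F) : ContDiff ℝ (⊤ : ℕ∞) (fun y => F (x₀, y)) :=
  hF.comp (contDiff_const.prodMk contDiff_id)

lemma fderiv_rest (hF : ContDiff ℝ (⊤ : ℕ∞) F) (y : Fin nN → ℝ) (b : Fin nN → ℝ) :
    fderiv ℝ (fun y => F (x₀, y)) y b = fderiv ℝ F (x₀, y) (0, b) := by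
  have h1 : HasFDerivAt (fun y : Fin nN → ℝ => (x₀, y))
      (ContinuousLinearMap.prod 0 (ContinuousLinearMap.id ℝ _)) y :=
    (hasFDerivAt_const _ _).prodMk (hasFDerivAt_id _)
  have h2 := ((hF.differentiable (by simp)) (x₀, y)).hasFDerivAt.comp y h1
  rw [show (fun y => F (x₀, y)) = F ∘ Prod.mk x₀ from rfl, h2.fderiv]
  rfl

lemma dd_rest (hF : ContDiff ℝ (⊤ : ℕ∞) F) (b : Fin nN → ℝ) :
    dd b (fun y => F (x₀, y)) = fun y => ∑ p : Fin nN, b p • pdF p F (x₀, y) := by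
  funext y
  show fderiv ℝ (fun y => F (x₀, y)) y b = _
  rw [fderiv_rest x₀ hF y b]
  have e : ((0, b) : (Fin mN → ℝ) × (Fin nN → ℝ))
      = ∑ p : Fin nN, b p • ((0, Pi.single p 1) : (Fin mN → ℝ) × (Fin nN → ℝ)) := by
    ext q
    · simp [Prod.fst_sum]
    · simp [Prod.snd_sum, Finset.sum_apply, Pi.single_apply]
  rw [e, map_sum]
  refine Finset.sum_congr rfl fun p _ => ?_
  rw [map_smul]
  rfl

variable (y₀ : Fin nN → ℝ)

lemma agree_rest : ∀ (k : ℕ) (F G : (Fin mN → ℝ) × (Fin nN → ℝ) → (Fin cN → ℝ)),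
    ContDiff ℝ (⊤ : ℕ∞) F → ContDiff ℝ (⊤ : ℕ∞) G →
    (∀ β : List (Fin nN), β.length ≤ k → pdFs β F (x₀, y₀) = pdFs β G (x₀, y₀)) →
    Agree k (fun y => F (x₀, y)) (fun y => G (x₀, y)) y₀ := by
  intro k
  induction k with
  | zero =>
    intro F G hF hG h i hi
    obtain rfl : i = 0 := Nat.le_zero.mp hi
    ext mv
    simpa [pdFs] using congrFun (h [] le_rfl) _
  | succ k ih =>
    intro F G hF hG h
    refine Agree.succ (contDiff_rest x₀ hF) (contDiff_rest x₀ hG) ?_ ?_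
    · have h0 := h [] (Nat.zero_le _)
      simp only [pdFs] at h0
      exact h0
    · intro b
      rw [dd_rest x₀ hF b, dd_rest x₀ hG b]
      refine Agree.sum Finset.univ
        (f := fun p y => b p • pdF p F (x₀, y)) (g := fun p y => b p • pdF p G (x₀, y))
        (fun p => ?_) (fun p => ?_) (fun p => ?_)
      · exact (contDiff_rest x₀ (hF.pdF_smooth p)).const_smul (b p)
      · exact (contDiff_rest x₀ (hG.pdF_smooth p)).const_smul (b p)
      · refine Agree.smul (b p) (contDiff_rest x₀ (hF.pdF_smooth p))
          (contDiff_rest x₀ (hG.pdF_smooth p)) ?_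
        refine ih (pdF p F) (pdF p G) (hF.pdF_smooth p) (hG.pdF_smooth p) fun β hβ => ?_
        rw [pdFs_append, pdFs_append]
        exact h (β ++ [p]) (by simpa using Nat.succ_le_succ hβ)

end Fiber
section Asm
variable {mN nN cN : ℕ}

/-- The fixed bilinear pairing `(C, W) ↦ (0, fun q => ∑ p, C p q.2 * W (q.1, p))`. -/
noncomputable def bilC (mN nN cN : ℕ) :
    (Fin nN → Fin cN → ℝ) →L[ℝ] (Fin mN × Fin nN → ℝ) →L[ℝ]
      ((Fin cN → ℝ) × (Fin mN × Fin cN → ℝ)) := by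
  refine LinearMap.toContinuousLinearMap
    { toFun := fun C => LinearMap.toContinuousLinearMap
        { toFun := fun W => ((0 : Fin cN → ℝ), fun q => ∑ p, C p q.2 * W (q.1, p))
          map_add' := by
            intro W W'
            ext q
            · simp
            · simp [mul_add, Finset.sum_add_distrib]
          map_smul' := by
            intro r W
            ext q
            · simp
            · simp [Finset.mul_sum, mul_comm, mul_assoc, mul_left_comm] }
      map_add' := ?_
      map_smul' := ?_ }
  · intro C C'
    ext W q
    · simp
    · simp [add_mul, Finset.sum_add_distrib]
  · intro r C
    ext W q
    · simp
    · simp [Finset.mul_sum, mul_assoc]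

lemma bilC_apply (C : Fin nN → Fin cN → ℝ) (W : Fin mN × Fin nN → ℝ) :
    bilC mN nN cN C W = ((0 : Fin cN → ℝ), fun q => ∑ p, C p q.2 * W (q.1, p)) := rfl

/-- Assembly of an affine-in-`W` map on the `J¹` fiber. -/
noncomputable def Asm (A : (Fin nN → ℝ) → (Fin cN → ℝ))
    (Bs : (Fin nN → ℝ) → (Fin mN × Fin cN → ℝ))
    (C : (Fin nN → ℝ) → (Fin nN → Fin cN → ℝ)) :
    (Fin nN → ℝ) × (Fin mN × Fin nN → ℝ) → (Fin cN → ℝ) × (Fin mN × Fin cN → ℝ) :=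
  fun z => (A z.1, Bs z.1) + bilC mN nN cN (C z.1) z.2

lemma contDiff_asm {A Bs C} (hA : ContDiff ℝ (⊤ : ℕ∞) A) (hBs : ContDiff ℝ (⊤ : ℕ∞) Bs)
    (hC : ContDiff ℝ (⊤ : ℕ∞) C) : ContDiff ℝ (⊤ : ℕ∞) (Asm (mN := mN) (nN := nN) (cN := cN) A Bs C) :=
  ((hA.comp contDiff_fst).prodMk (hBs.comp contDiff_fst)).add
    (((bilC mN nN cN).contDiff.comp (hC.comp contDiff_fst)).clm_apply contDiff_snd)

lemma dd_asm {A Bs C} (hA : ContDiff ℝ (⊤ : ℕ∞) A) (hBs : ContDiff ℝ (⊤ : ℕ∞) Bs) (hC : ContDiff ℝ (⊤ : ℕ∞) C)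
    (b : Fin nN → ℝ) (B : Fin mN × Fin nN → ℝ) :
    dd (b, B) (Asm (mN := mN) (nN := nN) (cN := cN) A Bs C) =
      Asm (dd b A) (fun y => dd b Bs y + (bilC mN nN cN (C y) B).2) (dd b C) := by
  funext z
  obtain ⟨y, W⟩ := z
  have hA' : HasFDerivAt A (fderiv ℝ A y) y := ((hA.differentiable (by simp)) y).hasFDerivAt
  have hBs' : HasFDerivAt Bs (fderiv ℝ Bs y) y := ((hBs.differentiable (by simp)) y).hasFDerivAt
  have hC' : HasFDerivAt C (fderiv ℝ C y) y := ((hC.differentiable (by simp)) y).hasFDerivAt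
  have h1 : HasFDerivAt
      (fun z : (Fin nN → ℝ) × (Fin mN × Fin nN → ℝ) => (A z.1, Bs z.1))
      (((fderiv ℝ A y).comp (ContinuousLinearMap.fst ℝ _ _)).prod
        ((fderiv ℝ Bs y).comp (ContinuousLinearMap.fst ℝ _ _))) (y, W) :=
    ((hA'.comp (y, W) hasFDerivAt_fst).prodMk (hBs'.comp (y, W) hasFDerivAt_fst))
  have hc : HasFDerivAt
      (fun z : (Fin nN → ℝ) × (Fin mN × Fin nN → ℝ) => bilC mN nN cN (C z.1))
      ((bilC mN nN cN).comp ((fderiv ℝ C y).comp (ContinuousLinearMap.fst ℝ _ _))) (y, W) :=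
    (bilC mN nN cN).hasFDerivAt.comp (y, W) (hC'.comp (y, W) hasFDerivAt_fst)
  have h2 := hc.clm_apply (hasFDerivAt_snd (p := ((y, W) : (Fin nN → ℝ) × (Fin mN × Fin nN → ℝ))))
  have h3 := h1.fun_add h2
  have eAsm : Asm A Bs C = fun x : (Fin nN → ℝ) × (Fin mN × Fin nN → ℝ) =>
      (A x.1, Bs x.1) + ((bilC mN nN cN) (C x.1)) x.2 := rfl
  show fderiv ℝ (Asm A Bs C) (y, W) (b, B) = _
  rw [eAsm, h3.fderiv]
  ext u
  · simp [Asm, dd, bilC_apply]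
  · simp [Asm, dd, bilC_apply]
    ring

end Asm
section Main
variable {mN nN cN : ℕ}

lemma agree_asm (y₀ : Fin nN → ℝ) : ∀ (k : ℕ)
    (A₁ A₂ : (Fin nN → ℝ) → (Fin cN → ℝ))
    (Bs₁ Bs₂ : (Fin nN → ℝ) → (Fin mN × Fin cN → ℝ))
    (C₁ C₂ : (Fin nN → ℝ) → (Fin nN → Fin cN → ℝ)),
    ContDiff ℝ (⊤ : ℕ∞) A₁ → ContDiff ℝ (⊤ : ℕ∞) A₂ → ContDiff ℝ (⊤ : ℕ∞) Bs₁ → ContDiff ℝ (⊤ : ℕ∞) Bs₂ →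
    ContDiff ℝ (⊤ : ℕ∞) C₁ → ContDiff ℝ (⊤ : ℕ∞) C₂ →
    Agree k A₁ A₂ y₀ → Agree k Bs₁ Bs₂ y₀ → Agree k C₁ C₂ y₀ →
    ∀ W₀ : Fin mN × Fin nN → ℝ,
      Agree k (Asm A₁ Bs₁ C₁) (Asm A₂ Bs₂ C₂) (y₀, W₀) := by
  intro k
  induction k with
  | zero =>
    intro A₁ A₂ Bs₁ Bs₂ C₁ C₂ _ _ _ _ _ _ hA hB hC W₀ i hi
    obtain rfl : i = 0 := Nat.le_zero.mp hi
    refine ContinuousMultilinearMap.ext fun mv => ?_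
    rw [iteratedFDeriv_zero_apply, iteratedFDeriv_zero_apply]
    simp [Asm, hA.eq_at, hB.eq_at, hC.eq_at]
  | succ k ih =>
    intro A₁ A₂ Bs₁ Bs₂ C₁ C₂ hA₁ hA₂ hB₁ hB₂ hC₁ hC₂ hA hB hC W₀
    refine Agree.succ (contDiff_asm hA₁ hB₁ hC₁) (contDiff_asm hA₂ hB₂ hC₂) ?_ ?_
    · simp [Asm, hA.eq_at, hB.eq_at, hC.eq_at]
    · rintro ⟨b, B⟩
      rw [dd_asm hA₁ hB₁ hC₁ b B, dd_asm hA₂ hB₂ hC₂ b B]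
      have hL : ∀ C : (Fin nN → ℝ) → (Fin nN → Fin cN → ℝ),
          (fun y => (bilC mN nN cN (C y) B).2)
            = fun y => ((ContinuousLinearMap.snd ℝ _ _).comp
                ((bilC mN nN cN).flip B)) (C y) := fun _ => rfl
      have hsm : ∀ (C : (Fin nN → ℝ) → (Fin nN → Fin cN → ℝ)), ContDiff ℝ (⊤ : ℕ∞) C →
          ContDiff ℝ (⊤ : ℕ∞) (fun y => (bilC mN nN cN (C y) B).2) := by
        intro C hC
        rw [hL]
        exact (ContinuousLinearMap.contDiff _).comp hC
      refine ih _ _ _ _ _ _ (hA₁.dd_smooth b) (hA₂.dd_smooth b)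
        ((hB₁.dd_smooth b).add (hsm _ hC₁)) ((hB₂.dd_smooth b).add (hsm _ hC₂))
        (hC₁.dd_smooth b) (hC₂.dd_smooth b)
        (hA.deriv hA₁ hA₂ b) ?_ (hC.deriv hC₁ hC₂ b) W₀
      refine Agree.add (hB₁.dd_smooth b) (hsm _ hC₁) (hB₂.dd_smooth b) (hsm _ hC₂)
        (hB.deriv hB₁ hB₂ b) ?_
      rw [hL, hL]
      exact Agree.clm_comp _ hC₁ hC₂ (hC.mono (Nat.le_succ k))

/-- Reindexing CLM `u ↦ fun q => if q.1 = i then u q.2 else 0`. -/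
noncomputable def LbCLM (mN cN : ℕ) (i : Fin mN) :
    (Fin cN → ℝ) →L[ℝ] (Fin mN × Fin cN → ℝ) :=
  LinearMap.toContinuousLinearMap
    { toFun := fun u q => if q.1 = i then u q.2 else 0
      map_add' := by intro u v; funext q; by_cases h : q.1 = i <;> simp [h]
      map_smul' := by intro r u; funext q; by_cases h : q.1 = i <;> simp [h] }

/-- `Pi.single` as a CLM. -/
noncomputable def LcCLM (nN cN : ℕ) (p : Fin nN) :
    (Fin cN → ℝ) →L[ℝ] (Fin nN → Fin cN → ℝ) :=
  LinearMap.toContinuousLinearMap (LinearMap.single ℝ (fun _ : Fin nN => Fin cN → ℝ) p)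

/-- if two fibered morphisms `f, g` over `ℝᵐ` have the same fiberwise
`(k,1)`-jet at `(x₀, y₀)`, i.e. `∂_β f`, `∂_β ∂_i f` and `∂_β ∂_p f` agree with those of
`g` at `(x₀, y₀)` for all fiber multi-indices `|β| ≤ k`, then the induced maps on the
`J¹`-fibers have the same `k`-jet at `(y₀, W₀)` for every value `W₀` of the first-jet
coordinates. -/
theorem fiberwise_k1_jet_determines_J1 {m n c k : ℕ}
    (f g : (Fin m → ℝ) × (Fin n → ℝ) → (Fin c → ℝ))
    (hf : ContDiff ℝ (⊤ : ℕ∞) f) (hg : ContDiff ℝ (⊤ : ℕ∞) g) (x₀ : Fin m → ℝ) (y₀ : Fin n → ℝ)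
    (h0 : ∀ β : List (Fin n), β.length ≤ k → pdFs β f (x₀, y₀) = pdFs β g (x₀, y₀))
    (h1 : ∀ β : List (Fin n), β.length ≤ k → ∀ i : Fin m,
      pdFs β (pdB i f) (x₀, y₀) = pdFs β (pdB i g) (x₀, y₀))
    (h2 : ∀ β : List (Fin n), β.length ≤ k → ∀ p : Fin n,
      pdFs β (pdF p f) (x₀, y₀) = pdFs β (pdF p g) (x₀, y₀)) :
    ∀ W₀ : Fin m × Fin n → ℝ, ∀ j ≤ k,
      iteratedFDeriv ℝ j (jetMap f x₀) (y₀, W₀) =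
        iteratedFDeriv ℝ j (jetMap g x₀) (y₀, W₀) := by
  -- the three data maps associated to a morphism
  set mkA : ((Fin m → ℝ) × (Fin n → ℝ) → (Fin c → ℝ)) → (Fin n → ℝ) → (Fin c → ℝ) :=
    fun F y => F (x₀, y) with hmkA
  set mkB : ((Fin m → ℝ) × (Fin n → ℝ) → (Fin c → ℝ)) → (Fin n → ℝ) → (Fin m × Fin c → ℝ) :=
    fun F y q => pdB q.1 F (x₀, y) q.2 with hmkB
  set mkC : ((Fin m → ℝ) × (Fin n → ℝ) → (Fin c → ℝ)) → (Fin n → ℝ) → (Fin n → Fin c → ℝ) :=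
    fun F y p => pdF p F (x₀, y) with hmkC
  -- smoothness
  have hA : ∀ F, ContDiff ℝ (⊤ : ℕ∞) F → ContDiff ℝ (⊤ : ℕ∞) (mkA F) := fun F hF => contDiff_rest x₀ hF
  have hB : ∀ F, ContDiff ℝ (⊤ : ℕ∞) F → ContDiff ℝ (⊤ : ℕ∞) (mkB F) := by
    intro F hF
    exact contDiff_pi.2 fun q => (contDiff_pi.1 (contDiff_rest x₀ (hF.pdB_smooth q.1))) q.2
  have hC : ∀ F, ContDiff ℝ (⊤ : ℕ∞) F → ContDiff ℝ (⊤ : ℕ∞) (mkC F) := by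
    intro F hF
    exact contDiff_pi.2 fun p => contDiff_rest x₀ (hF.pdF_smooth p)
  -- jetMap is an assembly
  have hjet : ∀ F, jetMap F x₀ = Asm (mkA F) (mkB F) (mkC F) := by
    intro F
    funext w
    ext u <;> simp [jetMap, Asm, bilC_apply, hmkA, hmkB, hmkC]
  -- agreement of the data maps
  have hAagree : Agree k (mkA f) (mkA g) y₀ := agree_rest x₀ y₀ k f g hf hg h0
  have hBagree : Agree k (mkB f) (mkB g) y₀ := by
    have eB : ∀ F, mkB F = fun y => ∑ i : Fin m, LbCLM m c i (pdB i F (x₀, y)) := by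
      intro F
      funext y
      funext q
      simp [hmkB, LbCLM, Finset.sum_apply, LinearMap.coe_toContinuousLinearMap']
    rw [eB f, eB g]
    refine Agree.sum Finset.univ (fun i => ?_) (fun i => ?_) (fun i => ?_)
    · exact (ContinuousLinearMap.contDiff _).comp (contDiff_rest x₀ (hf.pdB_smooth i))
    · exact (ContinuousLinearMap.contDiff _).comp (contDiff_rest x₀ (hg.pdB_smooth i))
    · exact Agree.clm_comp _ (contDiff_rest x₀ (hf.pdB_smooth i))
        (contDiff_rest x₀ (hg.pdB_smooth i))
        (agree_rest x₀ y₀ k (pdB i f) (pdB i g) (hf.pdB_smooth i) (hg.pdB_smooth i)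
          (fun β hβ => h1 β hβ i))
  have hCagree : Agree k (mkC f) (mkC g) y₀ := by
    have eC : ∀ F, mkC F = fun y => ∑ p : Fin n, LcCLM n c p (pdF p F (x₀, y)) := by
      intro F
      funext y
      show (fun p => pdF p F (x₀, y)) = _
      calc (fun p => pdF p F (x₀, y))
          = ∑ q : Fin n, Pi.single q (pdF q F (x₀, y)) :=
            (Finset.univ_sum_single (fun p => pdF p F (x₀, y))).symm
        _ = ∑ q : Fin n, LcCLM n c q (pdF q F (x₀, y)) := by
            refine Finset.sum_congr rfl fun q _ => ?_
            simp [LcCLM, LinearMap.coe_toContinuousLinearMap']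
    rw [eC f, eC g]
    refine Agree.sum Finset.univ (fun p => ?_) (fun p => ?_) (fun p => ?_)
    · exact (ContinuousLinearMap.contDiff _).comp (contDiff_rest x₀ (hf.pdF_smooth p))
    · exact (ContinuousLinearMap.contDiff _).comp (contDiff_rest x₀ (hg.pdF_smooth p))
    · exact Agree.clm_comp _ (contDiff_rest x₀ (hf.pdF_smooth p))
        (contDiff_rest x₀ (hg.pdF_smooth p))
        (agree_rest x₀ y₀ k (pdF p f) (pdF p g) (hf.pdF_smooth p) (hg.pdF_smooth p)
          (fun β hβ => h2 β hβ p))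
  intro W₀ j hj
  have key : Agree k (jetMap f x₀) (jetMap g x₀) (y₀, W₀) := by
    rw [hjet f, hjet g]
    exact agree_asm y₀ k _ _ _ _ _ _ (hA f hf) (hA g hg) (hB f hf) (hB g hg) (hC f hf) (hC g hg)
      hAagree hBagree hCagree W₀
  exact key j hj

end Main
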